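/- Let f : ℝⁿ → ℝ be a convex function and x₀ ∈ ℝⁿ. Suppose there exist a nontrivial linear subspace T ⊆ ℝⁿ and a nonzero vector e ∈ T such that Proj(s, T) = e for every s ∈ ∂f(x₀). For v ∈ ℝⁿ, let τ(v) denote the smallest element of {τ ≥ 0 : τ minimizes dist(v, τ∂f(x₀)) over τ ≥ 0}. Then τ is (1/‖e‖₂)-Lipschitz: for all v₁, v₂ ∈ ℝⁿ, |τ(v₁) − τ(v₂)| ≤ ‖v₁ − v₂‖₂ / ‖e‖₂. -/

import Mathlib

open MeasureTheory ProbabilityTheory Filter Topology Metric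
open scoped RealInnerProductSpace ENNReal Pointwise Matrix

noncomputable section

/-- Standard Gaussian measure on `ℝⁿ` (mean zero, identity covariance). -/
def stdGaussian (n : ℕ) : Measure (EuclideanSpace ℝ (Fin n)) :=
  Measure.map (⇑(EuclideanSpace.equiv (Fin n) ℝ).symm)
    (Measure.pi fun _ : Fin n => gaussianReal 0 1)

/-- `D(K)`: mean squared distance of a standard Gaussian vector to `K`. -/
def msd (n : ℕ) (K : Set (EuclideanSpace ℝ (Fin n))) : ℝ :=
  ∫ g, (Metric.infDist g K) ^ 2 ∂(stdGaussian n)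

variable {E : Type*} [NormedAddCommGroup E] [InnerProductSpace ℝ E]

/-- Subdifferential of `f` at `x₀`. -/
def subdiff (f : E → ℝ) (x₀ : E) : Set E :=
  {s | ∀ x, f x₀ + ⟪s, x - x₀⟫ ≤ f x}

/-- Cone generated by a set: `{c • x : c ≥ 0, x ∈ A}`. -/
def coneOf (A : Set E) : Set E :=
  {y | ∃ c : ℝ, 0 ≤ c ∧ ∃ x ∈ A, y = c • x}

/-- Set of feasible directions of `C` at `x₀`. -/
def feasible (C : Set E) (x₀ : E) : Set E := {z | x₀ + z ∈ C}

/-- Tangent cone of `C` at `x₀`: the closure of the cone of feasible directions. -/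
def tangentConeOf (C : Set E) (x₀ : E) : Set E := closure (coneOf (feasible C x₀))

/-- Polar cone of a set `K`. -/
def polarCone (K : Set E) : Set E := {v | ∀ x ∈ K, ⟪v, x⟫ ≤ 0}

open Classical in
/-- Metric projection onto `K` (the unique nearest point when `K` is nonempty,
closed and convex). -/
def projSet (K : Set E) (x : E) : E :=
  if h : ∃ y ∈ K, dist x y = Metric.infDist x K then h.choose else x

/-- Matrix-vector multiplication as a map between Euclidean spaces. -/
def matVec {m n : ℕ} (A : Matrix (Fin m) (Fin n) ℝ) (x : EuclideanSpace ℝ (Fin n)) :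
    EuclideanSpace ℝ (Fin m) :=
  (EuclideanSpace.equiv (Fin m) ℝ).symm (A.mulVec (EuclideanSpace.equiv (Fin n) ℝ x))

/-- Statistical dimension of `K`: `E ‖Proj(g,K)‖²` for standard Gaussian `g`. -/
def statDim (n : ℕ) (K : Set (EuclideanSpace ℝ (Fin n))) : ℝ :=
  ∫ g, ‖projSet K g‖ ^ 2 ∂(stdGaussian n)

end

/-- Borel/product measurable structure on real matrices. -/
instance matrixMeasurableSpace {m n : ℕ} : MeasurableSpace (Matrix (Fin m) (Fin n) ℝ) :=
  (inferInstance : MeasurableSpace (Fin m → Fin n → ℝ))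

/-!
Write `K = ∂f(x₀)`; it is compact and convex, and if it is empty then `τ ≡ 0`. The hypothesis on
the projections says `⟪s, e⟫ = ‖e‖²` for `s ∈ K`, so `0 ∉ K`, the cone `C = ⋃_{τ ≥ 0} τ K` is
closed and convex, and a point `x ∈ C` lies in `τ K` only for `τ = ⟪x, e⟫ / ‖e‖²`. Minimising
`dist(v, τ K)` over `τ ≥ 0` therefore amounts to minimising `dist(v, ·)` over `C`, whose unique
minimiser is the metric projection `P_C v`; hence `τ(v) = ⟪P_C v, e⟫ / ‖e‖²`, and the bound follows
because `P_C` is 1-Lipschitz.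
-/

open Set

section Subdifferential

variable {E : Type*} [NormedAddCommGroup E] [InnerProductSpace ℝ E]

theorem convex_subdiff (f : E → ℝ) (x₀ : E) : Convex ℝ (subdiff f x₀) := by
  intro s₁ hs₁ s₂ hs₂ a b ha hb hab x
  rw [inner_add_left, real_inner_smul_left, real_inner_smul_left]
  linear_combination a * hs₁ x + b * hs₂ x + (f x - f x₀) * hab

theorem isClosed_subdiff (f : E → ℝ) (x₀ : E) : IsClosed (subdiff f x₀) := by
  simp only [subdiff, ofPred_forall]
  exact isClosed_iInter fun x => isClosed_le (by fun_prop) continuous_const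

theorem norm_le_of_mem_subdiff {f : E → ℝ} {x₀ s : E} {B : ℝ}
    (hB : ∀ x ∈ Metric.closedBall x₀ 1, f x ≤ B) (hs : s ∈ subdiff f x₀) :
    ‖s‖ ≤ B - f x₀ := by
  rcases eq_or_ne s 0 with rfl | hs0
  · simpa using hB x₀ (Metric.mem_closedBall_self zero_le_one)
  have hpos : 0 < ‖s‖ := norm_pos_iff.mpr hs0
  have hunit : x₀ + ‖s‖⁻¹ • s ∈ Metric.closedBall x₀ 1 := by
    simp [norm_smul, hpos.ne']
  have h := hs (x₀ + ‖s‖⁻¹ • s)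
  rw [add_sub_cancel_left, real_inner_smul_right, real_inner_self_eq_norm_sq, sq,
    inv_mul_cancel_left₀ hpos.ne'] at h
  linarith [hB _ hunit]

theorem isCompact_subdiff [FiniteDimensional ℝ E] {f : E → ℝ} (hf : ConvexOn ℝ univ f)
    (x₀ : E) : IsCompact (subdiff f x₀) := by
  obtain ⟨B, hB⟩ := (isCompact_closedBall x₀ 1).exists_bound_of_continuousOn
    ((hf.continuousOn isOpen_univ).mono (subset_univ _))
  refine Metric.isCompact_of_isClosed_isBounded (isClosed_subdiff f x₀)
    (isBounded_iff_forall_norm_le.mpr ⟨B - f x₀, fun s hs => norm_le_of_mem_subdiff ?_ hs⟩)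
  exact fun x hx => (le_abs_self _).trans (hB x hx)

end Subdifferential

section Cone

variable {E : Type*} [NormedAddCommGroup E] [InnerProductSpace ℝ E] {K : Set E}

theorem convex_coneOf (hK : Convex ℝ K) : Convex ℝ (coneOf K) := by
  rintro _ ⟨c₁, hc₁, s₁, hs₁, rfl⟩ _ ⟨c₂, hc₂, s₂, hs₂, rfl⟩ a b ha hb hab
  have ha₁ : 0 ≤ a * c₁ := mul_nonneg ha hc₁
  have hb₂ : 0 ≤ b * c₂ := mul_nonneg hb hc₂
  rcases (add_nonneg ha₁ hb₂).eq_or_lt with hc | hc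
  · obtain ⟨h₁, h₂⟩ := (add_eq_zero_iff_of_nonneg ha₁ hb₂).1 hc.symm
    refine ⟨0, le_rfl, s₁, hs₁, ?_⟩
    simp only [smul_smul, h₁, h₂, zero_smul, add_zero]
  · set c := a * c₁ + b * c₂
    refine ⟨c, hc.le, (a * c₁ / c) • s₁ + (b * c₂ / c) • s₂,
      hK hs₁ hs₂ (by positivity) (by positivity) (by field_simp; rfl), ?_⟩
    rw [smul_add, smul_smul, smul_smul, smul_smul, smul_smul, mul_div_cancel₀ _ hc.ne',
      mul_div_cancel₀ _ hc.ne']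

theorem isClosed_coneOf (hK : IsCompact K) (h0 : (0 : E) ∉ K) : IsClosed (coneOf K) := by
  rcases K.eq_empty_or_nonempty with rfl | hne
  · simp [coneOf]
  obtain ⟨s₀, hs₀, hmin⟩ := hK.exists_isMinOn hne continuous_norm.continuousOn
  have hm : 0 < ‖s₀‖ := norm_pos_iff.mpr (ne_of_mem_of_not_mem hs₀ h0)
  refine isClosed_of_closure_subset fun x hx => ?_
  set r := ‖x‖ + 1
  -- near `x`, only the scalings `c ≤ r / ‖s₀‖` of `K` contribute to the cone
  have hlocal : Metric.ball 0 r ∩ coneOf K ⊆ Icc 0 (r / ‖s₀‖) • K := by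
    rintro _ ⟨hy, c, hc, s, hs, rfl⟩
    refine smul_mem_smul (mem_Icc.mpr ⟨hc, (le_div_iff₀ hm).mpr ?_⟩) hs
    rw [mem_ball_zero_iff, norm_smul, Real.norm_of_nonneg hc] at hy
    nlinarith [isMinOn_iff.mp hmin s hs]
  have hxball : x ∈ Metric.ball 0 r := by simp [r]
  obtain ⟨c, hc, s, hs, rfl⟩ := closure_minimal hlocal ((isCompact_Icc.smul_set hK).isClosed)
    (Metric.isOpen_ball.inter_closure ⟨hxball, hx⟩)
  exact ⟨c, (mem_Icc.mp hc).1, s, hs, rfl⟩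

end Cone

section NearestPoint

theorem IsClosed.exists_forall_dist_le {α : Type*} [PseudoMetricSpace α] [ProperSpace α]
    {C : Set α} (hC : IsClosed C) (hne : C.Nonempty) (v : α) :
    ∃ p ∈ C, ∀ w ∈ C, dist v p ≤ dist v w := by
  obtain ⟨p, hp, hpd⟩ := hC.exists_infDist_eq_dist hne v
  exact ⟨p, hp, fun w hw => hpd ▸ infDist_le_dist_of_mem hw⟩

variable {E : Type*} [NormedAddCommGroup E] [InnerProductSpace ℝ E] {C : Set E}

theorem inner_sub_nonpos_of_forall_dist_le (hC : Convex ℝ C) {v p : E} (hp : p ∈ C)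
    (hmin : ∀ w ∈ C, dist v p ≤ dist v w) : ∀ w ∈ C, ⟪v - p, w - p⟫ ≤ 0 := by
  have : Nonempty C := ⟨⟨p, hp⟩⟩
  refine (norm_eq_iInf_iff_real_inner_le_zero hC hp).mp (le_antisymm ?_ ?_)
  · exact le_ciInf fun w => by simpa only [dist_eq_norm] using hmin w w.2
  · exact ciInf_le (f := fun w : C => ‖v - (w : E)‖)
      ⟨0, forall_mem_range.2 fun _ => norm_nonneg _⟩ ⟨p, hp⟩

theorem norm_sub_le_of_inner_sub_nonpos {v₁ v₂ p₁ p₂ : E} (hp₁ : p₁ ∈ C) (hp₂ : p₂ ∈ C)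
    (h₁ : ∀ w ∈ C, ⟪v₁ - p₁, w - p₁⟫ ≤ 0) (h₂ : ∀ w ∈ C, ⟪v₂ - p₂, w - p₂⟫ ≤ 0) :
    ‖p₁ - p₂‖ ≤ ‖v₁ - v₂‖ := by
  have hsq : ‖p₁ - p₂‖ ^ 2 ≤ ‖v₁ - v₂‖ * ‖p₁ - p₂‖ :=
    calc ‖p₁ - p₂‖ ^ 2 = ⟪p₁ - p₂, p₁ - p₂⟫ := (real_inner_self_eq_norm_sq _).symm
      _ ≤ ⟪v₁ - v₂, p₁ - p₂⟫ := by
        have := h₁ p₂ hp₂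
        have := h₂ p₁ hp₁
        simp only [inner_sub_left, inner_sub_right, real_inner_comm p₁ p₂] at *
        linarith
      _ ≤ ‖v₁ - v₂‖ * ‖p₁ - p₂‖ := real_inner_le_norm _ _
  nlinarith [norm_nonneg (p₁ - p₂), norm_nonneg (v₁ - v₂)]

theorem norm_sub_le_of_forall_dist_le (hC : Convex ℝ C) {v₁ v₂ p₁ p₂ : E} (hp₁ : p₁ ∈ C)
    (hp₂ : p₂ ∈ C) (hmin₁ : ∀ w ∈ C, dist v₁ p₁ ≤ dist v₁ w)
    (hmin₂ : ∀ w ∈ C, dist v₂ p₂ ≤ dist v₂ w) : ‖p₁ - p₂‖ ≤ ‖v₁ - v₂‖ :=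
  norm_sub_le_of_inner_sub_nonpos hp₁ hp₂ (inner_sub_nonpos_of_forall_dist_le hC hp₁ hmin₁)
    (inner_sub_nonpos_of_forall_dist_le hC hp₂ hmin₂)

end NearestPoint

section OptimalScaling

variable {E : Type*} [NormedAddCommGroup E] [InnerProductSpace ℝ E]

def optimalScalings (K : Set E) (v : E) : Set ℝ :=
  {τ | 0 ≤ τ ∧ ∀ τ' : ℝ, 0 ≤ τ' → infDist v (τ • K) ≤ infDist v (τ' • K)}

theorem optimalScalings_empty (v : E) : optimalScalings (∅ : Set E) v = Ici 0 := by
  ext τ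
  simp [optimalScalings]

theorem inner_eq_norm_sq_of_orthogonalProjectionOnto_eq {T : Submodule ℝ E}
    [T.HasOrthogonalProjection] {e s : E} (he : e ∈ T)
    (hs : (T.orthogonalProjectionOnto s : E) = e) : ⟪s, e⟫ = ‖e‖ ^ 2 := by
  rw [← Submodule.inner_orthogonalProjectionOnto_eq_of_mem_right ⟨e, he⟩, Submodule.coe_inner, hs,
    real_inner_self_eq_norm_sq]

theorem abs_inner_div_sub_inner_div_le (x y e : E) :
    |⟪x, e⟫ / ‖e‖ ^ 2 - ⟪y, e⟫ / ‖e‖ ^ 2| ≤ ‖x - y‖ / ‖e‖ := by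
  rcases eq_or_ne e 0 with rfl | he
  · simp
  have hpos : 0 < ‖e‖ := norm_pos_iff.mpr he
  rw [← sub_div, ← inner_sub_left, abs_div, abs_of_pos (pow_pos hpos 2), sq, ← div_div]
  exact div_le_div_of_nonneg_right
    ((div_le_iff₀ hpos).mpr (abs_real_inner_le_norm _ _)) hpos.le

variable {K : Set E} {e : E}

theorem inner_eq_of_mem_smul_set (hKe : ∀ s ∈ K, ⟪s, e⟫ = ‖e‖ ^ 2) {τ : ℝ} {x : E}
    (hx : x ∈ τ • K) : ⟪x, e⟫ = τ * ‖e‖ ^ 2 := by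
  obtain ⟨s, hs, rfl⟩ := hx
  rw [real_inner_smul_left, hKe s hs]

theorem optimalScalings_eq_singleton (hK : IsCompact K) (hKc : Convex ℝ K)
    (hKe : ∀ s ∈ K, ⟪s, e⟫ = ‖e‖ ^ 2) (he : e ≠ 0) {v p : E} (hp : p ∈ coneOf K)
    (hmin : ∀ w ∈ coneOf K, dist v p ≤ dist v w) :
    optimalScalings K v = {⟪p, e⟫ / ‖e‖ ^ 2} := by
  obtain ⟨c, hc, s, hs, rfl⟩ := hp
  have hce : ⟪c • s, e⟫ / ‖e‖ ^ 2 = c := by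
    rw [inner_eq_of_mem_smul_set hKe (smul_mem_smul_set hs), mul_div_cancel_right₀ _ (by simpa)]
  have hcK : infDist v (c • K) ≤ dist v (c • s) := infDist_le_dist_of_mem (smul_mem_smul_set hs)
  have hle : ∀ τ : ℝ, 0 ≤ τ → dist v (c • s) ≤ infDist v (τ • K) := by
    intro τ hτ
    rw [le_infDist ⟨τ • s, smul_mem_smul_set hs⟩]
    rintro _ ⟨t, ht, rfl⟩
    exact hmin _ ⟨τ, hτ, t, ht, rfl⟩
  rw [hce]
  ext τ
  rw [mem_singleton_iff]
  refine ⟨fun ⟨hτ, hopt⟩ => ?_, ?_⟩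
  swap
  · rintro rfl
    exact ⟨hc, fun τ' hτ' => hcK.trans (hle τ' hτ')⟩
  -- a nearest point of `τ • K` is also nearest in the cone, hence equal to `c • s`
  obtain ⟨y, hy, hyd⟩ := (hK.smul τ).exists_infDist_eq_dist ⟨τ • s, smul_mem_smul_set hs⟩ v
  have hyC : y ∈ coneOf K := by
    obtain ⟨t, ht, rfl⟩ := hy
    exact ⟨τ, hτ, t, ht, rfl⟩
  have hymin : ∀ w ∈ coneOf K, dist v y ≤ dist v w := fun w hw =>
    calc dist v y ≤ dist v (c • s) := by rw [← hyd]; exact (hopt c hc).trans hcK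
      _ ≤ dist v w := hmin w hw
  have hpC : c • s ∈ coneOf K := ⟨c, hc, s, hs, rfl⟩
  have hyp : ‖y - c • s‖ ≤ ‖v - v‖ :=
    norm_sub_le_of_forall_dist_le (convex_coneOf hKc) hyC hpC hymin hmin
  rw [sub_self, norm_zero, norm_le_zero_iff, sub_eq_zero] at hyp
  rw [← hce, ← hyp, inner_eq_of_mem_smul_set hKe hy,
    mul_div_cancel_right₀ _ (by simpa)]

end OptimalScaling

theorem statement13_general {n : ℕ} (f : EuclideanSpace ℝ (Fin n) → ℝ)
    (hf : ConvexOn ℝ Set.univ f) (x₀ : EuclideanSpace ℝ (Fin n))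
    (T : Submodule ℝ (EuclideanSpace ℝ (Fin n)))
    (e : EuclideanSpace ℝ (Fin n)) (heT : e ∈ T) (he0 : e ≠ 0)
    (hproj : ∀ s ∈ subdiff f x₀,
      ((Submodule.orthogonalProjectionOnto T s : T) : EuclideanSpace ℝ (Fin n)) = e)
    (tau : EuclideanSpace ℝ (Fin n) → ℝ)
    (htau : ∀ v, tau v = sInf {τ : ℝ | 0 ≤ τ ∧ ∀ τ' : ℝ, 0 ≤ τ' →
      Metric.infDist v (τ • subdiff f x₀) ≤ Metric.infDist v (τ' • subdiff f x₀)}) :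
    ∀ v₁ v₂ : EuclideanSpace ℝ (Fin n), |tau v₁ - tau v₂| ≤ ‖v₁ - v₂‖ / ‖e‖ := by
  intro v₁ v₂
  set K := subdiff f x₀
  have htau' : ∀ v, tau v = sInf (optimalScalings K v) := htau
  rcases K.eq_empty_or_nonempty with hKempty | ⟨s₀, hs₀⟩
  · simp only [htau', hKempty, optimalScalings_empty, csInf_Ici, sub_self, abs_zero]
    positivity
  have hKe : ∀ s ∈ K, ⟪s, e⟫ = ‖e‖ ^ 2 := fun s hs =>
    inner_eq_norm_sq_of_orthogonalProjectionOnto_eq heT (hproj s hs)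
  have hK : IsCompact K := isCompact_subdiff hf x₀
  have h0 : (0 : EuclideanSpace ℝ (Fin n)) ∉ K := fun h =>
    (pow_pos (norm_pos_iff.mpr he0) 2).ne (by simpa using hKe 0 h)
  have hCne : (coneOf K).Nonempty := ⟨0, 0, le_rfl, s₀, hs₀, (zero_smul ℝ s₀).symm⟩
  obtain ⟨p₁, hp₁, hmin₁⟩ := (isClosed_coneOf hK h0).exists_forall_dist_le hCne v₁
  obtain ⟨p₂, hp₂, hmin₂⟩ := (isClosed_coneOf hK h0).exists_forall_dist_le hCne v₂
  have hKc := convex_subdiff f x₀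
  rw [htau', htau', optimalScalings_eq_singleton hK hKc hKe he0 hp₁ hmin₁,
    optimalScalings_eq_singleton hK hKc hKe he0 hp₂ hmin₂, csInf_singleton, csInf_singleton]
  calc _ ≤ ‖p₁ - p₂‖ / ‖e‖ := abs_inner_div_sub_inner_div_le p₁ p₂ e
    _ ≤ ‖v₁ - v₂‖ / ‖e‖ := by
      gcongr
      exact norm_sub_le_of_forall_dist_le (convex_coneOf hKc) hp₁ hp₂ hmin₁ hmin₂

/-- Lipschitzness of the optimal scaling.
If all subgradients in `∂f(x₀)` have the same (nonzero) orthogonal projection `e` onto a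
nontrivial subspace `T`, then the smallest optimal scaling
`τ(v) = min argmin_{τ≥0} dist(v, τ∂f(x₀))` is `(1/‖e‖)`-Lipschitz. -/
theorem statement13 {n : ℕ} (f : EuclideanSpace ℝ (Fin n) → ℝ)
    (hf : ConvexOn ℝ Set.univ f) (x₀ : EuclideanSpace ℝ (Fin n))
    (T : Submodule ℝ (EuclideanSpace ℝ (Fin n))) (hT : T ≠ ⊥)
    (e : EuclideanSpace ℝ (Fin n)) (heT : e ∈ T) (he0 : e ≠ 0)
    (hproj : ∀ s ∈ subdiff f x₀,
      ((Submodule.orthogonalProjectionOnto T s : T) : EuclideanSpace ℝ (Fin n)) = e)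
    (tau : EuclideanSpace ℝ (Fin n) → ℝ)
    (htau : ∀ v, tau v = sInf {τ : ℝ | 0 ≤ τ ∧ ∀ τ' : ℝ, 0 ≤ τ' →
      Metric.infDist v (τ • subdiff f x₀) ≤ Metric.infDist v (τ' • subdiff f x₀)}) :
    ∀ v₁ v₂ : EuclideanSpace ℝ (Fin n), |tau v₁ - tau v₂| ≤ ‖v₁ - v₂‖ / ‖e‖ :=
  statement13_general f hf x₀ T e heT he0 hproj tau htau
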